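/- Let f : ℕ+ → ℝ+ be a function such that lim_{r→∞} e^{r^α} f(r) = 0 for every 0 < α < 1, and fix d ∈ ℕ and C_Γ < ∞. Then there exist a non-increasing function F : ℕ → ℝ+ with F|_{ℕ+} ∈ 𝓜 and constants C_F, C'_F < ∞, depending only on f, d, C_Γ, such that f(r) ≤ F(r) for all r ∈ ℕ+ and, for every finite graph Γ satisfying sup_{x∈Γ} |B_r(x)| ≤ 1 + C_Γ r^d for all r ≥ 0, F is an F-function for Γ with constants C_F, C'_F. -/

import Mathlib

open scoped BigOperators ComplexOrder Matrix

noncomputable section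

namespace Stability

/-- The class `𝓜` of quasi-exponentially decaying functions: non-increasing, nonnegative,
and bounded by `C_α e^{-c_α r^α}` for every `0 < α < 1` (for positive arguments). -/
def InM (m : ℕ → ℝ) : Prop :=
  (∀ r, 0 ≤ m r) ∧ (∀ r s : ℕ, r ≤ s → m s ≤ m r) ∧
    ∀ α : ℝ, 0 < α → α < 1 →
      ∃ C c : ℝ, 0 < C ∧ 0 < c ∧ ∀ r : ℕ, 1 ≤ r → m r ≤ C * Real.exp (-(c * (r : ℝ) ^ α))

variable {Γ : Type} [Fintype Γ] [DecidableEq Γ]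

/-- The ball of radius `r` around `x` for the graph distance. -/
def ball (G : SimpleGraph Γ) (x : Γ) (r : ℕ) : Finset Γ :=
  Finset.univ.filter fun y => G.dist x y ≤ r

open Classical in
/-- The ball of a real radius `t` around `x` for the graph distance. -/
def ballR (G : SimpleGraph Γ) (x : Γ) (t : ℝ) : Finset Γ :=
  Finset.univ.filter fun y => (G.dist x y : ℝ) ≤ t

/-- `Γ` has dimension `d` with constant `CΓ`:  `|B_r(x)| ≤ 1 + CΓ r^d`. -/
def HasDim (G : SimpleGraph Γ) (d : ℕ) (CΓ : ℝ) : Prop :=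
  ∀ (x : Γ) (r : ℕ), ((ball G x r).card : ℝ) ≤ 1 + CΓ * (r : ℝ) ^ d

/-- Distance between two sets of vertices (junk value `0` if one of them is empty). -/
def setDist (G : SimpleGraph Γ) (X Y : Finset Γ) : ℕ :=
  sInf {n : ℕ | ∃ x ∈ X, ∃ y ∈ Y, G.dist x y = n}

/-- Distance from a point to a set. -/
def ptDist (G : SimpleGraph Γ) (x : Γ) (Y : Finset Γ) : ℕ := setDist G {x} Y

/-- Diameter of a finite set of vertices. -/
def diam (G : SimpleGraph Γ) (X : Finset Γ) : ℕ :=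
  sSup {n : ℕ | ∃ x ∈ X, ∃ y ∈ X, G.dist x y = n}

/-- The fattening `(Z)_r` of a set `Z`. -/
def fatten (G : SimpleGraph Γ) (Z : Finset Γ) (r : ℕ) : Finset Γ :=
  Finset.univ.filter fun x => ∃ z ∈ Z, G.dist x z ≤ r

/-- The boundary `∂Z = (Z)_1 ∩ (Z^c)_1` of a set `Z`. -/
def boundary (G : SimpleGraph Γ) (Z : Finset Γ) : Finset Γ :=
  fatten G Z 1 ∩ fatten G Zᶜ 1

/-- The rank-one operator `|ψ⟩⟨ψ|` of a vector. -/
def rankOne {ι : Type} (ψ : ι → ℂ) : Matrix ι ι ℂ := fun a b => ψ a * star (ψ b)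

/-- `ψ` is a unit vector for the `ℓ²` norm. -/
def UnitVec {ι : Type} [Fintype ι] (ψ : ι → ℂ) : Prop := ∑ a, Complex.normSq (ψ a) = 1

/-- Operator norm of a matrix, acting on the Euclidean (ℓ²) space. -/
def opNorm {ι : Type} [Fintype ι] [DecidableEq ι] (A : Matrix ι ι ℂ) : ℝ :=
  ‖Matrix.toEuclideanCLM (𝕜 := ℂ) A‖

/-- Trace norm `‖A‖₁ = tr √(AᴴA)` of a matrix. -/
def traceNorm {ι : Type} [Fintype ι] [DecidableEq ι] (A : Matrix ι ι ℂ) : ℝ :=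
  ((Matrix.isHermitian_conjTranspose_mul_self A).eigenvectorUnitary.1 *
    Matrix.diagonal (((↑) : ℝ → ℂ) ∘ Real.sqrt ∘ (Matrix.isHermitian_conjTranspose_mul_self A).eigenvalues) *
    (star (Matrix.isHermitian_conjTranspose_mul_self A).eigenvectorUnitary : Matrix ι ι ℂ)).trace.re

/-- `γ(A) = min (spec(A) \ {0})` (junk value if the set has no infimum in `ℝ`). -/
def mingap {ι : Type} [Fintype ι] [DecidableEq ι] (A : Matrix ι ι ℂ) : ℝ :=
  sInf {t : ℝ | t ≠ 0 ∧ (t : ℂ) ∈ spectrum ℂ A}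

/-- `P` is the orthogonal projector onto the kernel of `A`. -/
def IsKerProj {ι : Type} [Fintype ι] [DecidableEq ι] (A P : Matrix ι ι ℂ) : Prop :=
  P.IsHermitian ∧ P * P = P ∧ A * P = 0 ∧ ∀ v : ι → ℂ, A.mulVec v = 0 → P.mulVec v = v

section ops

variable (κ : Γ → Type) [∀ x, Fintype (κ x)] [∀ x, DecidableEq (κ x)]

/-- Configurations of the whole system; `ℋ = ℂ^(Cfg κ)`. -/
abbrev Cfg : Type := ∀ x : Γ, κ x

/-- Configurations of the subsystem in the region `X`. -/
abbrev SubCfg (X : Finset Γ) : Type := ∀ x : X, κ x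

/-- Observables on the whole system: `𝒜 = B(ℋ)`. -/
abbrev Op : Type := Matrix (Cfg κ) (Cfg κ) ℂ

/-- Embedding `𝒜_X → 𝒜`, `O ↦ O ⊗ 1_{X^c}`. -/
def embed (X : Finset Γ) (O : Matrix (SubCfg κ X) (SubCfg κ X) ℂ) : Op κ := fun a b =>
  if ∀ x, x ∉ X → a x = b x then O (fun x => a x.1) (fun x => b x.1) else 0

/-- `A` is supported in the region `X`. -/
def SupportedIn (X : Finset Γ) (A : Op κ) : Prop := ∃ O, A = embed κ X O

/-- Glue a configuration on `X` and one on `Xᶜ` to a global configuration. -/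
def glue (X : Finset Γ) (a : SubCfg κ X) (c : SubCfg κ Xᶜ) : Cfg κ := fun x =>
  if h : x ∈ X then a ⟨x, h⟩ else c ⟨x, Finset.mem_compl.mpr h⟩

/-- Partial trace `tr_{X^c} : 𝒜 → 𝒜_X`. -/
def ptrace (X : Finset Γ) (A : Op κ) : Matrix (SubCfg κ X) (SubCfg κ X) ℂ := fun a b =>
  ∑ c : SubCfg κ Xᶜ, A (glue κ X a c) (glue κ X b c)

/-- The local trace norm `|A|_X = ‖tr_{X^c} A‖₁`. -/
def locNorm (X : Finset Γ) (A : Op κ) : ℝ := traceNorm (ptrace κ X A)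

/-- Expectation value `⟨A⟩_ρ = tr(ρ A)` (real part). -/
def expVal (ρ A : Op κ) : ℝ := ((ρ * A).trace).re

/-- `ρ` is a density matrix. -/
def IsDensity (ρ : Op κ) : Prop := ρ.PosSemidef ∧ ρ.trace = 1

/-- An interaction: a collection of self-adjoint operators `q_X` supported in `X`. -/
def IsInteraction (q : Finset Γ → Op κ) : Prop :=
  ∀ X, (q X).IsHermitian ∧ SupportedIn κ X (q X)

/-- `‖q‖_m ≤ C` where `‖q‖_m = sup_x Σ_{X ∋ x} ‖q_X‖ / m(1 + diam X)`. -/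
def intNormLE (G : SimpleGraph Γ) (m : ℕ → ℝ) (q : Finset Γ → Op κ) (C : ℝ) : Prop :=
  ∀ x : Γ, ∑ X ∈ Finset.univ.filter (fun X : Finset Γ => x ∈ X),
      opNorm (q X) / m (1 + diam G X) ≤ C

/-- `|||q|||_F ≤ C` where `|||q|||_F = sup_{x,y} Σ_{S ⊇ {x,y}} ‖q_S‖ / F(dist(x,y))`. -/
def fNormLE (G : SimpleGraph Γ) (F : ℕ → ℝ) (q : Finset Γ → Op κ) (C : ℝ) : Prop :=
  ∀ x y : Γ, ∑ S ∈ Finset.univ.filter (fun S : Finset Γ => x ∈ S ∧ y ∈ S),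
      opNorm (q S) / F (G.dist x y) ≤ C

/-- The global Hamiltonian `H = Σ_X h_X`. -/
def ham (h : Finset Γ → Op κ) : Op κ := ∑ X : Finset Γ, h X

/-- The OBC restriction `H_Z = Σ_{X ⊆ Z} h_X`. -/
def hamOn (h : Finset Γ → Op κ) (Z : Finset Γ) : Op κ :=
  ∑ X ∈ Finset.univ.filter (fun X : Finset Γ => X ⊆ Z), h X

/-- The conditional expectation `𝔼_{Y^c} : 𝒜 → 𝒜_Y`, `O ↦ (tr_{Y^c} O / dim ℋ_{Y^c}) ⊗ 1_{Y^c}`.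
Applied to a density matrix it yields `tr_{Y^c}(ρ) ⊗ ι_{Y^c}` with `ι` the normalized trace. -/
def condExp (Y : Finset Γ) (A : Op κ) : Op κ := fun a b =>
  if ∀ x, x ∉ Y → a x = b x then
    ptrace κ Y A (fun x => a x.1) (fun x => b x.1) / (Fintype.card (SubCfg κ Yᶜ) : ℂ)
  else 0

/-- Tensor product of an operator on `Z` with an operator on `Z^c`. -/
def cutTensor (Z : Finset Γ) (A : Matrix (SubCfg κ Z) (SubCfg κ Z) ℂ)
    (B : Matrix (SubCfg κ Zᶜ) (SubCfg κ Zᶜ) ℂ) : Op κ := fun a b =>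
  A (fun x => a x.1) (fun x => b x.1) * B (fun x => a x.1) (fun x => b x.1)

/-- `tr_{Z^c}(μ) ⊗ tr_Z(ρ)`. -/
def splitState (Z : Finset Γ) (μ ρ : Op κ) : Op κ :=
  cutTensor κ Z (ptrace κ Z μ) (ptrace κ Zᶜ ρ)

/-- `Φ` is a ground state of the (self-adjoint) matrix `A`: a unit eigenvector whose
eigenvalue is the minimum of the spectrum. -/
def IsGroundState (A : Op κ) (ψ : Cfg κ → ℂ) : Prop :=
  UnitVec ψ ∧ ∃ lam : ℝ, A.mulVec ψ = (lam : ℂ) • ψ ∧ ∀ z ∈ spectrum ℂ A, lam ≤ z.re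

end ops

/-- The Choi matrix of a map on matrices. -/
def choi {ι : Type} [Fintype ι] [DecidableEq ι] (Φ : Matrix ι ι ℂ → Matrix ι ι ℂ) :
    Matrix (ι × ι) (ι × ι) ℂ := fun p q => Φ (Matrix.single p.1 q.1 1) p.2 q.2

/-- `Φ` is a trace-preserving completely positive map (complete positivity via Choi's theorem). -/
def IsCPTP {ι : Type} [Fintype ι] [DecidableEq ι] (Φ : Matrix ι ι ℂ → Matrix ι ι ℂ) : Prop :=
  IsLinearMap ℂ Φ ∧ (choi Φ).PosSemidef ∧ ∀ A, (Φ A).trace = A.trace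

section stitching

variable (κ : Γ → Type) [∀ x, Fintype (κ x)] [∀ x, DecidableEq (κ x)]

/-- Definition of a family of stitching maps `Σ_Z` with function `m`, for the state `μ`. -/
def IsStitching (G : SimpleGraph Γ) (μ : Op κ) (S : Finset Γ → Op κ → Op κ) (m : ℕ → ℝ) :
    Prop :=
  (∀ Z, IsCPTP (S Z)) ∧
    (∀ Z X : Finset Γ, ∀ ρ : Op κ, IsDensity κ ρ →
      locNorm κ X (S Z ρ - splitState κ Z μ ρ) ≤
        (X.card : ℝ) * m (setDist G (boundary G Z) X)) ∧
    (∀ Z X : Finset Γ, ∀ r : ℕ, 1 ≤ r → ∀ ρ ω : Op κ, IsDensity κ ρ → IsDensity κ ω →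
      locNorm κ X (S Z ρ - S Z ω) ≤
        locNorm κ (fatten G X r) (ρ - ω) + (X.card : ℝ) * m r) ∧
    (∀ Z, S Z μ = μ)

/-- A map on observables preserves almost locality with function `m`. -/
def PreservesAlmostLocality (G : SimpleGraph Γ) (T : Op κ → Op κ) (m : ℕ → ℝ) : Prop :=
  ∀ (X : Finset Γ) (r : ℕ), 1 ≤ r → ∀ O : Op κ, SupportedIn κ X O →
    opNorm (T O - condExp κ (fatten G X r) (T O)) ≤ opNorm O * (X.card : ℝ) * m r

end stitching

section aux

variable (κ κ' : Γ → Type)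
variable [∀ x, Fintype (κ x)] [∀ x, DecidableEq (κ x)]
variable [∀ x, Fintype (κ' x)] [∀ x, DecidableEq (κ' x)]

/-- Sites of the enlarged system `𝓗̃ = ℋ ⊗ ℋ'`. -/
abbrev AuxSites : Γ → Type := fun x => κ x × κ' x

/-- Tensor product of vectors `ψ ⊗ ψ'` in `𝓗̃`. -/
def tensorVec (ψ : Cfg κ → ℂ) (ψ' : Cfg κ' → ℂ) : Cfg (AuxSites κ κ') → ℂ := fun a =>
  ψ (fun x => (a x).1) * ψ' (fun x => (a x).2)

/-- Tensor product of operators `ρ ⊗ ρ'` on `𝓗̃`. -/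
def tensorOp (ρ : Op κ) (ρ' : Op κ') : Op (AuxSites κ κ') := fun a b =>
  ρ (fun x => (a x).1) (fun x => (b x).1) * ρ' (fun x => (a x).2) (fun x => (b x).2)

/-- Partial trace over the auxiliary space, `tr_{ℋ'} : B(𝓗̃) → B(ℋ)`. -/
def ptraceAux (A : Op (AuxSites κ κ')) : Op κ := fun a b =>
  ∑ c : Cfg κ', A (fun x => (a x, c x)) (fun x => (b x, c x))

/-- A product vector `⊗_x π_x`. -/
def IsProductVec (ψ : Cfg κ → ℂ) : Prop :=
  ∃ p : ∀ x : Γ, κ x → ℂ, ∀ a, ψ a = ∏ x : Γ, p x (a x)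

end aux

/-- `U` solves the Schrödinger-type integral equation
`U(s) = 1 + i ∫₀ˢ H(u) U(u) du` on `[0,1]` (entrywise). -/
def SolvesEvolution {ι : Type} [Fintype ι] [DecidableEq ι]
    (H : ℝ → Matrix ι ι ℂ) (U : ℝ → Matrix ι ι ℂ) : Prop :=
  ∀ s ∈ Set.Icc (0 : ℝ) 1, ∀ a b,
    U s a b = (1 : Matrix ι ι ℂ) a b + Complex.I * ∫ u in (0 : ℝ)..s, (H u * U u) a b

/-- The truncated interaction `q̂` associated to the cut `Z | Z^c`. -/
def qhat {ι : Type} (Z : Finset Γ) (q : ℝ → Finset Γ → Matrix ι ι ℂ) :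
    ℝ → Finset Γ → Matrix ι ι ℂ := fun s X => if X ⊆ Z ∨ X ⊆ Zᶜ then q s X else 0

section inv

variable (κ κ' : Γ → Type)
variable [∀ x, Fintype (κ x)] [∀ x, DecidableEq (κ x)]
variable [∀ x, Fintype (κ' x)] [∀ x, DecidableEq (κ' x)]

/-- Assumption (Inv): the data `(q, U, Ω')` witnesses invertibility of the state `Ω = ω`:
`q(s)` is a measurable family of interactions on `𝓗̃` with `sup_s ‖q(s)‖_{m_I} ≤ C_I`,
`U` solves the corresponding evolution equation, and `Ω ⊗ Ω' = U(1) Π` with `Π` a product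
unit vector. -/
def InvData (G : SimpleGraph Γ) (mI : ℕ → ℝ) (CI : ℝ)
    (q : ℝ → Finset Γ → Op (AuxSites κ κ')) (U : ℝ → Op (AuxSites κ κ'))
    (ω : Cfg κ → ℂ) (ω' : Cfg κ' → ℂ) : Prop :=
  (∀ s ∈ Set.Icc (0 : ℝ) 1, IsInteraction (AuxSites κ κ') (q s)) ∧
    (∀ (X : Finset Γ) a b, Measurable fun s => q s X a b) ∧
    (∀ s ∈ Set.Icc (0 : ℝ) 1, intNormLE (AuxSites κ κ') G mI (q s) CI) ∧
    SolvesEvolution (fun s => ∑ X : Finset Γ, q s X) U ∧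
    UnitVec ω' ∧
    ∃ Pv : Cfg (AuxSites κ κ') → ℂ, IsProductVec (AuxSites κ κ') Pv ∧ UnitVec Pv ∧
      tensorVec κ κ' ω ω' = (U 1).mulVec Pv

/-- The stitching map `Σ_Z` built from the unitary `V = V_Z`:
`Σ_Z(ρ) = tr_{ℋ'}[V^*(tr_{Z^c}(V(μ⊗μ')V^*) ⊗ tr_Z(V(ρ⊗μ')V^*))V]`. -/
def stitchMap (Z : Finset Γ) (V : Op (AuxSites κ κ')) (μ : Op κ) (μ' : Op κ')
    (ρ : Op κ) : Op κ :=
  ptraceAux κ κ' (Vᴴ *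
    cutTensor (AuxSites κ κ') Z
      (ptrace (AuxSites κ κ') Z (V * tensorOp κ κ' μ μ' * Vᴴ))
      (ptrace (AuxSites κ κ') Zᶜ (V * tensorOp κ κ' ρ μ' * Vᴴ)) * V)

end inv

/-- An F-function on the graph `Γ` with constants `CF`, `CF'`. -/
def IsFFunction (G : SimpleGraph Γ) (F : ℕ → ℝ) (CF CF' : ℝ) : Prop :=
  (∀ x y : Γ, ∑ z : Γ, F (G.dist x z) * F (G.dist z y) ≤ CF * F (G.dist x y)) ∧
    ∀ x : Γ, ∑ y : Γ, F (G.dist x y) ≤ CF'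

/-- The logarithmic-superadditive envelope `S(f)` of `f`: the supremum of `∏ f(r_i)`
over all compositions `r = r_1 + ⋯ + r_ℓ` with `r_i ∈ ℕ+`. -/
def Senv (f : ℕ → ℝ) (r : ℕ) : ℝ :=
  sSup {t : ℝ | ∃ L : List ℕ, L ≠ [] ∧ (∀ i ∈ L, 1 ≤ i) ∧ L.sum = r ∧ t = (L.map f).prod}

end Stability

/-!
Write `q = d + 2` and `u r = f r * (r + 1) ^ q`; a polynomial factor does not spoil stretched
exponential decay, so `u` is dominated by a positive non-increasing `v` with the same decay.
The function `g = log (v 0 / v) + 1` is non-decreasing, at least `1`, and grows like `r ^ α`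
for every `α < 1`; so does its subadditive minorant `G r = r * min_{1 ≤ k ≤ r} g k / k`.
Hence `E = exp (-G)` is supermultiplicative and dominates `u` up to a constant, and
`F r = κ * P r * E r` with `P r = (r + 1) ^ (-q)` dominates `f`. In
`∑ z, F (dist x z) * F (dist z y)` the factor `E` is controlled by supermultiplicativity and the
triangle inequality, the factor `P` by `P a * P b ≤ 2 ^ q * P c * (P a + P b)` for `c ≤ a + b`,
and `∑ y, P (dist x y)` is bounded uniformly thanks to `|B_r(x)| ≤ 1 + C_Γ r ^ d`.
-/
namespace Stability

open Real Filter Topology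

def HasStretchedExpDecay (u : ℕ → ℝ) : Prop :=
  ∀ α : ℝ, 0 < α → α < 1 →
    ∃ C c : ℝ, 0 < C ∧ 0 < c ∧ ∀ r : ℕ, 1 ≤ r → u r ≤ C * exp (-(c * (r : ℝ) ^ α))

theorem hasStretchedExpDecay_of_tendsto {f : ℕ → ℝ}
    (hf : ∀ α : ℝ, 0 < α → α < 1 →
      Tendsto (fun r : ℕ => exp ((r : ℝ) ^ α) * f r) atTop (𝓝 0)) :
    HasStretchedExpDecay f := by
  intro α hα0 hα1
  obtain ⟨C, hC⟩ := (hf α hα0 hα1).bddAbove_range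
  refine ⟨max C 1, 1, by positivity, one_pos, fun r _ => ?_⟩
  calc f r = exp (-(r : ℝ) ^ α) * (exp ((r : ℝ) ^ α) * f r) := by
        rw [← mul_assoc, ← exp_add, neg_add_cancel, exp_zero, one_mul]
    _ ≤ exp (-(r : ℝ) ^ α) * max C 1 :=
        mul_le_mul_of_nonneg_left ((hC ⟨r, rfl⟩).trans (le_max_left _ _)) (exp_pos _).le
    _ = max C 1 * exp (-(1 * (r : ℝ) ^ α)) := by rw [one_mul, mul_comm]

/-- From `y ^ n / n! ≤ exp y` with `y = c * x ^ α` and `n * α ≥ q`. -/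
theorem pow_le_mul_exp_mul_rpow {α c : ℝ} (hα : 0 < α) (hc : 0 < c) (q : ℕ) :
    ∃ C, 0 < C ∧ ∀ x : ℝ, 1 ≤ x → x ^ q ≤ C * exp (c * x ^ α) := by
  set n := ⌈q / α⌉₊
  refine ⟨n.factorial / c ^ n, by positivity, fun x hx => ?_⟩
  have hqn : (q : ℝ) ≤ n * α := (div_le_iff₀ hα).1 (Nat.le_ceil _)
  calc x ^ q = x ^ (q : ℝ) := (rpow_natCast x q).symm
    _ ≤ x ^ (n * α) := rpow_le_rpow_of_exponent_le hx hqn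
    _ = (c * x ^ α) ^ n / c ^ n := by
        rw [rpow_natCast_mul (by linarith), mul_pow, mul_div_cancel_left₀ _ (by positivity),
          ← rpow_natCast, ← rpow_mul (by linarith), ← rpow_natCast, ← rpow_mul (by linarith),
          mul_comm]
    _ ≤ n.factorial * exp (c * x ^ α) / c ^ n := by
        gcongr
        have h := pow_div_factorial_le_exp (c * x ^ α) (by positivity) n
        rwa [div_le_iff₀ (by positivity), mul_comm (exp _)] at h
    _ = n.factorial / c ^ n * exp (c * x ^ α) := by ring

theorem hasStretchedExpDecay_exp_neg : HasStretchedExpDecay fun r => exp (-(r : ℝ)) := by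
  intro α _ hα1
  refine ⟨1, 1, one_pos, one_pos, fun r hr => ?_⟩
  rw [one_mul, one_mul, exp_le_exp, neg_le_neg_iff]
  exact rpow_le_self_of_one_le (by exact_mod_cast hr) hα1.le

def tailSup (u : ℕ → ℝ) (n : ℕ) : ℝ := ⨆ t, u (n + t)

section tailSup

variable {u : ℕ → ℝ}

theorem bddAbove_range_tail (hu : BddAbove (Set.range u)) (n : ℕ) :
    BddAbove (Set.range fun t => u (n + t)) :=
  hu.mono (Set.range_comp_subset_range _ u)

theorem le_tailSup (hu : BddAbove (Set.range u)) (n : ℕ) : u n ≤ tailSup u n :=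
  le_ciSup (bddAbove_range_tail hu n) 0

theorem antitone_tailSup (hu : BddAbove (Set.range u)) : Antitone (tailSup u) := fun m n hmn =>
  ciSup_le fun t => by
    rw [show n + t = m + (n - m + t) by omega]
    exact le_ciSup (bddAbove_range_tail hu m) (n - m + t)

end tailSup

namespace HasStretchedExpDecay

variable {u w : ℕ → ℝ}

theorem mul_pow (hu : HasStretchedExpDecay u) (q : ℕ) :
    HasStretchedExpDecay fun r => u r * ((r : ℝ) + 1) ^ q := by
  intro α hα0 hα1
  obtain ⟨C, c, hC, hc, hu⟩ := hu α hα0 hα1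
  obtain ⟨C', hC', hpow⟩ := pow_le_mul_exp_mul_rpow hα0 (half_pos hc) q
  refine ⟨C * (2 ^ q * C'), c / 2, by positivity, half_pos hc, fun r hr => ?_⟩
  have hr' : (1 : ℝ) ≤ r := by exact_mod_cast hr
  have hpow' : ((r : ℝ) + 1) ^ q ≤ 2 ^ q * (C' * exp (c / 2 * (r : ℝ) ^ α)) :=
    calc ((r : ℝ) + 1) ^ q ≤ (2 * r) ^ q := by gcongr; linarith
      _ = 2 ^ q * r ^ q := _root_.mul_pow _ _ _
      _ ≤ _ := by gcongr; exact hpow r hr'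
  calc u r * ((r : ℝ) + 1) ^ q
      ≤ C * exp (-(c * (r : ℝ) ^ α)) * (2 ^ q * (C' * exp (c / 2 * (r : ℝ) ^ α))) :=
        mul_le_mul (hu r hr) hpow' (by positivity) (by positivity)
    _ = C * (2 ^ q * C') * exp (-(c / 2 * (r : ℝ) ^ α)) := by
        rw [show -(c / 2 * (r : ℝ) ^ α) = -(c * (r : ℝ) ^ α) + c / 2 * (r : ℝ) ^ α by ring,
          exp_add]
        ring

theorem sup (hu : HasStretchedExpDecay u) (hw : HasStretchedExpDecay w) :
    HasStretchedExpDecay (u ⊔ w) := by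
  intro α hα0 hα1
  obtain ⟨C, c, hC, hc, hu⟩ := hu α hα0 hα1
  obtain ⟨C', c', hC', hc', hw⟩ := hw α hα0 hα1
  refine ⟨max C C', min c c', lt_max_of_lt_left hC, lt_min hc hc', fun r hr => ?_⟩
  have hexp : ∀ b, min c c' ≤ b →
      exp (-(b * (r : ℝ) ^ α)) ≤ exp (-(min c c' * (r : ℝ) ^ α)) := fun b hb => by
    gcongr
  refine max_le ((hu r hr).trans ?_) ((hw r hr).trans ?_)
  · exact mul_le_mul (le_max_left _ _) (hexp c (min_le_left _ _)) (exp_pos _).le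
      (hC.le.trans (le_max_left _ _))
  · exact mul_le_mul (le_max_right _ _) (hexp c' (min_le_right _ _)) (exp_pos _).le
      (hC.le.trans (le_max_left _ _))

theorem of_le_const_mul {κ : ℝ} (hu : HasStretchedExpDecay u)
    (hκ : 0 < κ) (h : ∀ r, 1 ≤ r → w r ≤ κ * u r) : HasStretchedExpDecay w := by
  intro α hα0 hα1
  obtain ⟨C, c, hC, hc, hu⟩ := hu α hα0 hα1
  refine ⟨κ * C, c, mul_pos hκ hC, hc, fun r hr => ?_⟩
  rw [mul_assoc]
  exact (h r hr).trans (mul_le_mul_of_nonneg_left (hu r hr) hκ.le)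

theorem bddAbove_range (hu : HasStretchedExpDecay u) : BddAbove (Set.range u) := by
  obtain ⟨C, c, hC, hc, hu⟩ := hu (1 / 2) (by norm_num) (by norm_num)
  refine ⟨max C (u 0), ?_⟩
  rintro _ ⟨r, rfl⟩
  rcases Nat.eq_zero_or_pos r with rfl | hr
  · exact le_max_right _ _
  · refine (hu r hr).trans ((mul_le_of_le_one_right hC.le ?_).trans (le_max_left _ _))
    rw [exp_le_one_iff, neg_nonpos]
    positivity

theorem tailSup (hu : HasStretchedExpDecay u) : HasStretchedExpDecay (tailSup u) := by
  intro α hα0 hα1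
  obtain ⟨C, c, hC, hc, hu⟩ := hu α hα0 hα1
  refine ⟨C, c, hC, hc, fun n hn => ciSup_le fun t => (hu (n + t) (by omega)).trans ?_⟩
  gcongr
  exact_mod_cast Nat.le_add_right n t

theorem exists_pos_antitone_majorant (hu : HasStretchedExpDecay u) :
    ∃ v : ℕ → ℝ, (∀ n, 0 < v n) ∧ Antitone v ∧ u ≤ v ∧ HasStretchedExpDecay v := by
  refine ⟨Stability.tailSup u ⊔ fun n => exp (-(n : ℝ)), fun n => ?_, fun m n hmn => ?_,
    fun n => ?_, hu.tailSup.sup hasStretchedExpDecay_exp_neg⟩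
  · exact lt_sup_of_lt_right (exp_pos _)
  · refine sup_le_sup (antitone_tailSup hu.bddAbove_range hmn) ?_
    simp only [exp_le_exp, neg_le_neg_iff, Nat.cast_le, hmn]
  · exact le_sup_of_le_left (le_tailSup hu.bddAbove_range n)

end HasStretchedExpDecay

/-- The minimal slope over `[1, r]` is non-increasing in `r`, which makes
`r ↦ r * (minimal slope)` subadditive. -/
def slopeMinorant (g : ℕ → ℝ) (r : ℕ) : ℝ :=
  if h : 1 ≤ r then r * (Finset.Icc 1 r).inf' (Finset.nonempty_Icc.2 h) fun k => g k / k else 0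

section slopeMinorant

variable {g : ℕ → ℝ} {r : ℕ}

@[simp]
theorem slopeMinorant_zero : slopeMinorant g 0 = 0 := rfl

theorem slopeMinorant_of_one_le (hr : 1 ≤ r) :
    slopeMinorant g r =
      r * (Finset.Icc 1 r).inf' (Finset.nonempty_Icc.2 hr) fun k => g k / k :=
  dif_pos hr

theorem slopeMinorant_le (hg0 : 0 ≤ g 0) (r : ℕ) : slopeMinorant g r ≤ g r := by
  rcases Nat.eq_zero_or_pos r with rfl | hr
  · simpa using hg0
  rw [slopeMinorant_of_one_le hr]
  calc _ ≤ (r : ℝ) * (g r / r) := mul_le_mul_of_nonneg_left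
        (Finset.inf'_le (fun k : ℕ => g k / k) (Finset.mem_Icc.2 ⟨hr, le_rfl⟩)) (Nat.cast_nonneg r)
    _ = g r := mul_div_cancel₀ _ (by positivity)

theorem subadditive_slopeMinorant : Subadditive (slopeMinorant g) := by
  intro a b
  rcases Nat.eq_zero_or_pos a with rfl | ha
  · simp
  rcases Nat.eq_zero_or_pos b with rfl | hb
  · simp
  rw [slopeMinorant_of_one_le ha, slopeMinorant_of_one_le hb,
    slopeMinorant_of_one_le (by omega : 1 ≤ a + b), Nat.cast_add, add_mul]
  gcongr <;> omega

theorem monotone_slopeMinorant (hg : Monotone g) (hg0 : 0 ≤ g 0) :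
    Monotone (slopeMinorant g) := by
  have hg_nonneg : ∀ k, 0 ≤ g k := fun k => hg0.trans (hg (Nat.zero_le k))
  intro r s hrs
  rcases Nat.eq_zero_or_pos r with rfl | hr
  · rcases Nat.eq_zero_or_pos s with rfl | hs
    · rfl
    rw [slopeMinorant_zero, slopeMinorant_of_one_le hs]
    exact mul_nonneg (Nat.cast_nonneg s)
      (Finset.le_inf' _ _ fun k _ => div_nonneg (hg_nonneg k) (Nat.cast_nonneg k))
  have hs : 1 ≤ s := hr.trans_le hrs
  obtain ⟨k, hk, hk_eq⟩ := Finset.exists_mem_eq_inf' (Finset.nonempty_Icc.2 hs) fun k => g k / k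
  rw [Finset.mem_Icc] at hk
  rw [slopeMinorant_of_one_le hs, hk_eq]
  rcases le_or_gt k r with hkr | hrk
  · rw [slopeMinorant_of_one_le hr]
    have hslope : (Finset.Icc 1 r).inf' (Finset.nonempty_Icc.2 hr) (fun k => g k / k) ≤ g k / k :=
      Finset.inf'_le _ (Finset.mem_Icc.2 ⟨hk.1, hkr⟩)
    have hslope0 : 0 ≤ (Finset.Icc 1 r).inf' (Finset.nonempty_Icc.2 hr) (fun k => g k / k) :=
      Finset.le_inf' _ _ fun k _ => div_nonneg (hg_nonneg k) (Nat.cast_nonneg k)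
    gcongr
  · have hk0 : (0 : ℝ) < k := by exact_mod_cast hk.1
    calc slopeMinorant g r ≤ g r := slopeMinorant_le hg0 r
      _ ≤ g k := hg hrk.le
      _ ≤ s * (g k / k) := by
        have hks : (k : ℝ) ≤ s := by exact_mod_cast hk.2
        rw [mul_div_assoc', le_div_iff₀ hk0]
        nlinarith [hg_nonneg k]

theorem mul_rpow_le_slopeMinorant {c α : ℝ} (hc : 0 ≤ c) (hα : α ≤ 1)
    (hg : ∀ k : ℕ, 1 ≤ k → c * (k : ℝ) ^ α ≤ g k) (hr : 1 ≤ r) :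
    c * (r : ℝ) ^ α ≤ slopeMinorant g r := by
  have hr0 : (0 : ℝ) < r := by exact_mod_cast hr
  rw [slopeMinorant_of_one_le hr]
  calc c * (r : ℝ) ^ α = r * (c * (r : ℝ) ^ (α - 1)) := by
        rw [rpow_sub hr0, rpow_one]; field_simp
    _ ≤ _ := by
      refine mul_le_mul_of_nonneg_left (Finset.le_inf' _ _ fun k hk => ?_) hr0.le
      rw [Finset.mem_Icc] at hk
      have hk0 : (0 : ℝ) < k := by exact_mod_cast hk.1
      calc c * (r : ℝ) ^ (α - 1) ≤ c * (k : ℝ) ^ (α - 1) :=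
            mul_le_mul_of_nonneg_left
              (rpow_le_rpow_of_nonpos hk0 (by exact_mod_cast hk.2) (by linarith)) hc
        _ = c * (k : ℝ) ^ α / k := by rw [rpow_sub hk0, rpow_one, mul_div_assoc]
        _ ≤ g k / k := by gcongr; exact hg k hk.1

end slopeMinorant

theorem div_one_add_le_of_sub_le {t h D : ℝ} (hD : 0 ≤ D) (h1 : 1 ≤ h) (h2 : t - D ≤ h) :
    t / (1 + D) ≤ h := by
  rw [div_le_iff₀ (by linarith)]
  nlinarith

namespace HasStretchedExpDecay

variable {u : ℕ → ℝ}

theorem exists_mul_rpow_le_log_div_add_one {v : ℕ → ℝ} (hv0 : ∀ n, 0 < v n) (hv_anti : Antitone v)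
    (hv : HasStretchedExpDecay v) {α : ℝ} (hα0 : 0 < α) (hα1 : α < 1) :
    ∃ c, 0 < c ∧ ∀ k : ℕ, 1 ≤ k → c * (k : ℝ) ^ α ≤ log (v 0 / v k) + 1 := by
  obtain ⟨C, c, hC, hc, hv⟩ := hv α hα0 hα1
  set D := max (log C - log (v 0)) 0
  refine ⟨c / (1 + D), by positivity, fun k hk => ?_⟩
  have hlog_nonneg : 0 ≤ log (v 0 / v k) :=
    log_nonneg ((one_le_div (hv0 k)).2 (hv_anti (Nat.zero_le k)))
  have hlog : c * (k : ℝ) ^ α - D ≤ log (v 0 / v k) + 1 := by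
    have h := log_le_log (hv0 k) (hv k hk)
    rw [log_mul hC.ne' (exp_pos _).ne', log_exp] at h
    rw [log_div (hv0 0).ne' (hv0 k).ne']
    linarith [le_max_left (log C - log (v 0)) 0]
  rw [div_mul_eq_mul_div]
  exact div_one_add_le_of_sub_le (le_max_right _ _) (by linarith) hlog

theorem exists_supermul_majorant (hu : HasStretchedExpDecay u) :
    ∃ (E : ℕ → ℝ) (κ : ℝ), 0 < κ ∧ (∀ n, 0 < E n) ∧ Antitone E ∧
      (∀ a b, E a * E b ≤ E (a + b)) ∧ HasStretchedExpDecay E ∧ ∀ n, u n ≤ κ * E n := by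
  obtain ⟨v, hv0, hv_anti, huv, hv⟩ := hu.exists_pos_antitone_majorant
  set g : ℕ → ℝ := fun n => log (v 0 / v n) + 1
  have hg : Monotone g := fun m n hmn =>
    add_le_add_left (log_le_log (div_pos (hv0 0) (hv0 m))
      (div_le_div_of_nonneg_left (hv0 0).le (hv0 n) (hv_anti hmn))) 1
  have hg0 : 0 ≤ g 0 := by simp [g, div_self (hv0 0).ne']
  refine ⟨fun n => exp (-slopeMinorant g n), v 0 * exp 1, by have := hv0 0; positivity,
    fun n => exp_pos _, fun m n hmn => ?_, fun a b => ?_, fun α hα0 hα1 => ?_, fun n => ?_⟩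
  · simpa using monotone_slopeMinorant hg hg0 hmn
  · rw [← exp_add, exp_le_exp, ← neg_add]
    exact neg_le_neg (subadditive_slopeMinorant a b)
  · obtain ⟨c, hc, hgc⟩ := exists_mul_rpow_le_log_div_add_one hv0 hv_anti hv hα0 hα1
    refine ⟨1, c, one_pos, hc, fun r hr => ?_⟩
    rw [one_mul, exp_le_exp, neg_le_neg_iff]
    exact mul_rpow_le_slopeMinorant hc.le hα1.le hgc hr
  · calc u n ≤ v n := huv n
      _ = v 0 * exp 1 * exp (-g n) := by
        rw [mul_assoc, ← exp_add, show 1 + -g n = -log (v 0 / v n) by ring, exp_neg,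
          exp_log (div_pos (hv0 0) (hv0 n)), inv_div, mul_div_cancel₀ _ (hv0 0).ne']
      _ ≤ v 0 * exp 1 * exp (-slopeMinorant g n) := by
        have := hv0 0
        gcongr
        exact slopeMinorant_le hg0 n

end HasStretchedExpDecay

variable {Γ : Type} [Fintype Γ] {G : SimpleGraph Γ}

theorem IsFFunction.const_mul {F : ℕ → ℝ} {CF CF' κ : ℝ} (hF : IsFFunction G F CF CF')
    (hκ : 0 ≤ κ) : IsFFunction G (fun n => κ * F n) (κ * CF) (κ * CF') := by
  refine ⟨fun x y => ?_, fun x => ?_⟩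
  · calc ∑ z, κ * F (G.dist x z) * (κ * F (G.dist z y))
        = κ * κ * ∑ z, F (G.dist x z) * F (G.dist z y) := by
          rw [Finset.mul_sum]; exact Finset.sum_congr rfl fun _ _ => by ring
      _ ≤ κ * κ * (CF * F (G.dist x y)) := by gcongr; exact hF.1 x y
      _ = κ * CF * (κ * F (G.dist x y)) := by ring
  · rw [← Finset.mul_sum]
    exact mul_le_mul_of_nonneg_left (hF.2 x) hκ

section doubling

variable {P : ℕ → ℝ} {K : ℝ}

theorem mul_le_mul_add_of_doubling (hK : 0 ≤ K) (hP0 : ∀ n, 0 ≤ P n)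
    (hP : ∀ a c, c ≤ 2 * a → P a ≤ K * P c) {a b c : ℕ} (h : c ≤ a + b) :
    P a * P b ≤ K * P c * (P a + P b) := by
  have hKc : 0 ≤ K * P c := mul_nonneg hK (hP0 c)
  rcases le_total a b with hab | hba
  · calc P a * P b ≤ P a * (K * P c) :=
          mul_le_mul_of_nonneg_left (hP b c (by omega)) (hP0 a)
      _ ≤ K * P c * (P a + P b) := by nlinarith [hP0 b]
  · calc P a * P b ≤ K * P c * P b := mul_le_mul_of_nonneg_right (hP a c (by omega)) (hP0 b)
      _ ≤ K * P c * (P a + P b) := by nlinarith [hP0 a]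

theorem isFFunction_mul {E : ℕ → ℝ} {S : ℝ} (hK : 0 ≤ K) (hP0 : ∀ n, 0 ≤ P n)
    (hP : ∀ a c, c ≤ 2 * a → P a ≤ K * P c) (hE0 : ∀ n, 0 ≤ E n) (hE_anti : Antitone E)
    (hE : ∀ a b, E a * E b ≤ E (a + b)) (hG : G.Connected)
    (hS : ∀ x, ∑ y, P (G.dist x y) ≤ S) :
    IsFFunction G (fun n => P n * E n) (2 * K * S) (E 0 * S) := by
  refine ⟨fun x y => ?_, fun x => ?_⟩
  · set c := G.dist x y
    have hz : ∀ z, P (G.dist x z) * E (G.dist x z) * (P (G.dist z y) * E (G.dist z y)) ≤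
        K * P c * E c * (P (G.dist x z) + P (G.dist y z)) := fun z => by
      have htri : c ≤ G.dist x z + G.dist z y := hG.dist_triangle
      have hPP := mul_le_mul_add_of_doubling hK hP0 hP htri
      have hEE : E (G.dist x z) * E (G.dist z y) ≤ E c := (hE _ _).trans (hE_anti htri)
      rw [G.dist_comm (u := y)]
      calc _ = P (G.dist x z) * P (G.dist z y) * (E (G.dist x z) * E (G.dist z y)) := by ring
        _ ≤ K * P c * (P (G.dist x z) + P (G.dist z y)) * E c :=
          mul_le_mul hPP hEE (mul_nonneg (hE0 _) (hE0 _))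
            (mul_nonneg (mul_nonneg hK (hP0 c)) (add_nonneg (hP0 _) (hP0 _)))
        _ = _ := by ring
    have hKPE : 0 ≤ K * P c * E c := mul_nonneg (mul_nonneg hK (hP0 c)) (hE0 c)
    calc _ ≤ ∑ z, K * P c * E c * (P (G.dist x z) + P (G.dist y z)) :=
          Finset.sum_le_sum fun z _ => hz z
      _ = K * P c * E c * (∑ z, P (G.dist x z) + ∑ z, P (G.dist y z)) := by
        rw [← Finset.mul_sum, Finset.sum_add_distrib]
      _ ≤ K * P c * E c * (S + S) := by gcongr <;> apply hS
      _ = 2 * K * S * (P c * E c) := by ring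
  · calc ∑ y, P (G.dist x y) * E (G.dist x y) ≤ ∑ y, E 0 * P (G.dist x y) :=
          Finset.sum_le_sum fun y _ => by
            rw [mul_comm]; exact mul_le_mul_of_nonneg_right (hE_anti (Nat.zero_le _)) (hP0 _)
      _ ≤ E 0 * S := by rw [← Finset.mul_sum]; exact mul_le_mul_of_nonneg_left (hS x) (hE0 0)

end doubling

theorem inv_add_one_pow_le_of_le_two_mul (q : ℕ) {a c : ℕ} (h : c ≤ 2 * a) :
    (((a : ℝ) + 1) ^ q)⁻¹ ≤ 2 ^ q * (((c : ℝ) + 1) ^ q)⁻¹ := by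
  rw [← div_eq_mul_inv, le_div_iff₀ (by positivity), ← div_eq_inv_mul,
    div_le_iff₀ (by positivity), ← mul_pow]
  gcongr
  have : (c : ℝ) ≤ 2 * a := by exact_mod_cast h
  linarith

theorem summable_inv_add_one_sq : Summable fun m : ℕ => (((m : ℝ) + 1) ^ 2)⁻¹ := by
  simpa [one_div] using
    (summable_nat_add_iff 1).2 (Real.summable_one_div_nat_pow.2 one_lt_two)

theorem sum_inv_add_one_pow_dist_le {d : ℕ} {CΓ : ℝ} (hdim : HasDim G d CΓ) (x : Γ) :
    ∑ y, (((G.dist x y : ℝ) + 1) ^ (d + 2))⁻¹ ≤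
      (1 + max CΓ 0) * ∑' m : ℕ, (((m : ℝ) + 1) ^ 2)⁻¹ := by
  set M := max CΓ 0
  have hball : ∀ m : ℕ, ((ball G x m).card : ℝ) * (((m : ℝ) + 1) ^ (d + 2))⁻¹ ≤
      (1 + M) * (((m : ℝ) + 1) ^ 2)⁻¹ := fun m => by
    have h1 : (1 : ℝ) ≤ ((m : ℝ) + 1) ^ d := one_le_pow₀ (by linarith [m.cast_nonneg (α := ℝ)])
    have h2 : (m : ℝ) ^ d ≤ ((m : ℝ) + 1) ^ d := by gcongr; linarith
    have hcard : ((ball G x m).card : ℝ) ≤ (1 + M) * ((m : ℝ) + 1) ^ d := by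
      refine (hdim x m).trans ?_
      nlinarith [le_max_left CΓ 0, le_max_right CΓ 0, pow_nonneg (m.cast_nonneg (α := ℝ)) d]
    calc _ ≤ (1 + M) * ((m : ℝ) + 1) ^ d * (((m : ℝ) + 1) ^ (d + 2))⁻¹ := by gcongr
      _ = _ := by rw [pow_add]; field_simp
  rw [Finset.sum_comp (fun m : ℕ => (((m : ℝ) + 1) ^ (d + 2))⁻¹) (G.dist x)]
  calc _ ≤ ∑ m ∈ Finset.univ.image (G.dist x), (1 + M) * (((m : ℝ) + 1) ^ 2)⁻¹ := by
        refine Finset.sum_le_sum fun m _ => ?_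
        rw [nsmul_eq_mul]
        refine le_trans ?_ (hball m)
        gcongr
        exact Finset.monotone_filter_right _ fun _ _ => le_of_eq
    _ ≤ _ := by
      rw [← Finset.mul_sum]
      gcongr
      exact summable_inv_add_one_sq.sum_le_tsum _ fun m _ => by positivity

theorem dominating_fFunction_exists_general
    (f : ℕ → ℝ)
    (hdecay : ∀ α : ℝ, 0 < α → α < 1 →
      Filter.Tendsto (fun r : ℕ => Real.exp ((r : ℝ) ^ α) * f r) Filter.atTop (nhds 0))
    (d : ℕ) (CΓ : ℝ) :
    ∃ (F : ℕ → ℝ) (CF CF' : ℝ), InM F ∧ (∀ r : ℕ, 1 ≤ r → f r ≤ F r) ∧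
      ∀ (Γ : Type) [Fintype Γ] [DecidableEq Γ] (G : SimpleGraph Γ), G.Connected →
        HasDim G d CΓ → IsFFunction G F CF CF' := by
  obtain ⟨E, κ, hκ, hE0, hE_anti, hE_mul, hE_decay, hfE⟩ :=
    ((hasStretchedExpDecay_of_tendsto hdecay).mul_pow (d + 2)).exists_supermul_majorant
  set P : ℕ → ℝ := fun n => (((n : ℝ) + 1) ^ (d + 2))⁻¹
  set S : ℝ := (1 + max CΓ 0) * ∑' m : ℕ, (((m : ℝ) + 1) ^ 2)⁻¹
  have hP_anti : Antitone P := fun m n hmn => by dsimp only [P]; gcongr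
  have hP1 : ∀ n, P n ≤ 1 := fun n => inv_le_one_of_one_le₀ (one_le_pow₀ (by simp))
  refine ⟨fun n => κ * (P n * E n), κ * (2 * 2 ^ (d + 2) * S), κ * (E 0 * S),
    ⟨fun n => by have := hE0 n; positivity, fun m n hmn => ?_, ?_⟩, fun r _ => ?_,
    fun Γ _ _ G hG hdim => ?_⟩
  · exact mul_le_mul_of_nonneg_left
      (mul_le_mul (hP_anti hmn) (hE_anti hmn) (hE0 n).le (by positivity)) hκ.le
  · exact hE_decay.of_le_const_mul hκ fun r _ => mul_le_mul_of_nonneg_left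
      (mul_le_of_le_one_left (hE0 r).le (hP1 r)) hκ.le
  · show f r ≤ κ * ((((r : ℝ) + 1) ^ (d + 2))⁻¹ * E r)
    rw [mul_left_comm, ← div_eq_inv_mul, le_div_iff₀ (by positivity)]
    exact hfE r
  · exact (isFFunction_mul (by positivity) (fun n => by positivity)
      (fun a c h => inv_add_one_pow_le_of_le_two_mul (d + 2) h) (fun n => (hE0 n).le) hE_anti
      hE_mul hG (sum_inv_add_one_pow_dist_le hdim)).const_mul hκ.le

/-- **Lemma 10 (domination by an F-function in `𝓜`)**.  Let `f : ℕ+ → ℝ+` satisfy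
`lim_{r→∞} e^{r^α} f(r) = 0` for every `0 < α < 1`, and fix `d ∈ ℕ` and `C_Γ < ∞`.  Then
there exist a non-increasing `F : ℕ → ℝ+` with `F|_{ℕ+} ∈ 𝓜` and constants
`C_F, C'_F < ∞`, depending only on `f, d, C_Γ`, such that `f(r) ≤ F(r)` for all
`r ∈ ℕ+` and, for every finite graph `Γ` of dimension `d` with constant `C_Γ`, `F` is an
F-function for `Γ` with constants `C_F, C'_F`. -/
theorem dominating_fFunction_exists
    (f : ℕ → ℝ) (hf0 : ∀ r, 0 ≤ f r)
    (hdecay : ∀ α : ℝ, 0 < α → α < 1 →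
      Filter.Tendsto (fun r : ℕ => Real.exp ((r : ℝ) ^ α) * f r) Filter.atTop (nhds 0))
    (d : ℕ) (CΓ : ℝ) :
    ∃ (F : ℕ → ℝ) (CF CF' : ℝ), InM F ∧ (∀ r : ℕ, 1 ≤ r → f r ≤ F r) ∧
      ∀ (Γ : Type) [Fintype Γ] [DecidableEq Γ] (G : SimpleGraph Γ), G.Connected →
        HasDim G d CΓ → IsFFunction G F CF CF' :=
  dominating_fFunction_exists_general f hdecay d CΓ

end Stability
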